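/- arXiv:1807.04705 — 2 statements merged into one kernel-verified Lean document; each statement's English description precedes it below -/
import Mathlib

section
/- For every 2×2 or 3×3 correlation matrix X (i.e., a positive semidefinite complex matrix with all diagonal entries equal to 1), X can be written as a convex combination X = Σ_i p_i v_i v_i* of finitely many terms, where each v_i is a vector whose entries all have absolute value 1. -/
open Matrix BigOperators Complex ComplexOrder

noncomputable section

variable {ι : Type*} [Fintype ι] [DecidableEq ι]

/-- A density matrix: positive semidefinite with unit trace. -/
def IsDensityMatrix (ρ : Matrix ι ι ℂ) : Prop := ρ.PosSemidef ∧ ρ.trace = 1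

/-- The rank-one projector |ψ⟩⟨ψ| associated to a vector. -/
def pureState (ψ : ι → ℂ) : Matrix ι ι ℂ := Matrix.of fun i j => ψ i * (starRingEnd ℂ) (ψ j)

/-- The trace norm ‖A‖₁ = Tr √(AᴴA). -/
def traceNorm (A : Matrix ι ι ℂ) : ℝ :=
  (((Matrix.posSemidef_conjTranspose_mul_self A).1.eigenvectorUnitary.1 *
    diagonal (((↑) : ℝ → ℂ) ∘ (√·) ∘ (Matrix.posSemidef_conjTranspose_mul_self A).1.eigenvalues) *
    (star (Matrix.posSemidef_conjTranspose_mul_self A).1.eigenvectorUnitary : Matrix ι ι ℂ)).trace).re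

open Classical in
/-- Matrix square root (junk value 0 on matrices that are not PSD). -/
def matSqrt (A : Matrix ι ι ℂ) : Matrix ι ι ℂ := if h : A.PosSemidef then
  h.1.eigenvectorUnitary.1 * diagonal (((↑) : ℝ → ℂ) ∘ (√·) ∘ h.1.eigenvalues) *
    (star h.1.eigenvectorUnitary : Matrix ι ι ℂ) else 0

/-- Fidelity F(ρ,σ) = ‖√ρ√σ‖₁². -/
def fidelity (ρ σ : Matrix ι ι ℂ) : ℝ := (traceNorm (matSqrt ρ * matSqrt σ))^2

/-- The dephasing map Δ, keeping only the diagonal. -/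
def deph (ρ : Matrix ι ι ℂ) : Matrix ι ι ℂ := Matrix.diagonal (fun i => ρ i i)

/-- The m-distillation norm ‖ψ‖_{[m]} = min_x (‖ψ-x‖₁ + √m ‖x‖₂). -/
def distNorm (m : ℕ) (ψ : ι → ℂ) : ℝ :=
  ⨅ x : ι → ℂ, ((∑ i, ‖ψ i - x i‖) +
    Real.sqrt m * Real.sqrt (∑ i, (‖x i‖)^2))

/-- M_m: convex combinations of pure states with ℓ∞ norm at most 1/√m. -/
def Mset (m : ℕ) : Set (Matrix ι ι ℂ) :=
  {ω | ∃ (n : ℕ) (p : Fin n → ℝ) (ψ : Fin n → ι → ℂ),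
    (∀ i, 0 ≤ p i) ∧ (∑ i, p i = 1) ∧
    (∀ i, ∑ j, (‖ψ i j‖)^2 = 1) ∧
    (∀ i j, ‖ψ i j‖ ≤ 1 / Real.sqrt m) ∧
    ω = ∑ i, p i • pureState (ψ i)}

/-- N_m: density matrices with all diagonal entries at most 1/m. -/
def Nset (m : ℕ) : Set (Matrix ι ι ℂ) :=
  {ω | IsDensityMatrix ω ∧ ∀ i, (ω i i).re ≤ 1 / m}

/-- Optimal fidelity of assisted distillation F_A(ρ,m) = max_{ω ∈ M_m} F(ρ,ω). -/
def FA (ρ : Matrix ι ι ℂ) (m : ℕ) : ℝ :=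
  sSup {r : ℝ | ∃ ω ∈ Mset (ι := ι) m, r = fidelity ρ ω}


def cX (m u : ℂ) : ℝ := ((starRingEnd ℂ) m * u).re
def cR (m u : ℂ) : ℝ := Real.sqrt (cX m u ^ 2 + (1 - Complex.normSq m))
def cP (m u : ℂ) : ℝ := (cX m u + cR m u) / (2 * cR m u)
def cW (m u : ℂ) : ℂ := m + (↑(cR m u - cX m u)) * u
def cW' (m u : ℂ) : ℂ := m - (↑(cR m u + cX m u)) * u

variable {m u : ℂ}
lemma cR_nonneg : 0 ≤ cR m u := Real.sqrt_nonneg _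
lemma cR_sq (hm : Complex.normSq m ≤ 1) : cR m u ^ 2 = cX m u ^ 2 + (1 - Complex.normSq m) := by
  rw [cR, Real.sq_sqrt]; nlinarith [sq_nonneg (cX m u)]
lemma abs_cX_le (hm : Complex.normSq m ≤ 1) : |cX m u| ≤ cR m u := by
  have h := cR_sq (u := u) hm
  have h2 := cR_nonneg (m := m) (u := u)
  nlinarith [abs_nonneg (cX m u), _root_.sq_abs (cX m u)]
lemma cP_nonneg (hm : Complex.normSq m ≤ 1) (hR : 0 < cR m u) : 0 ≤ cP m u := by
  have := abs_le.mp (abs_cX_le (u := u) hm)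
  rw [cP]; apply div_nonneg <;> nlinarith [this.1, this.2]
lemma cP_le_one (hm : Complex.normSq m ≤ 1) (hR : 0 < cR m u) : cP m u ≤ 1 := by
  have := abs_le.mp (abs_cX_le (u := u) hm)
  rw [cP, div_le_one (by linarith)]; linarith [this.2]
lemma normSq_cW (hm : Complex.normSq m ≤ 1) (hu : Complex.normSq u = 1) :
    Complex.normSq (cW m u) = 1 := by
  have hre : (m * (starRingEnd ℂ) ((↑(cR m u - cX m u)) * u)).re
      = (cR m u - cX m u) * cX m u := by
    simp [_root_.map_mul, Complex.conj_ofReal, cX, Complex.mul_re, Complex.mul_im]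
    ring
  rw [cW, Complex.normSq_add, hre, Complex.normSq_mul, Complex.normSq_ofReal, hu]
  have h := cR_sq (u := u) hm
  nlinarith []
lemma normSq_cW' (hm : Complex.normSq m ≤ 1) (hu : Complex.normSq u = 1) :
    Complex.normSq (cW' m u) = 1 := by
  have hre : (m * (starRingEnd ℂ) (-((↑(cR m u + cX m u)) * u))).re
      = -((cR m u + cX m u) * cX m u) := by
    simp [_root_.map_mul, Complex.conj_ofReal, cX, Complex.mul_re, Complex.mul_im]
    ring
  rw [cW', sub_eq_add_neg, Complex.normSq_add, hre, Complex.normSq_neg, Complex.normSq_mul,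
    Complex.normSq_ofReal, hu]
  have h := cR_sq (u := u) hm
  nlinarith []
lemma cW_mean (hR : 0 < cR m u) :
    (↑(cP m u) : ℂ) * cW m u + (1 - ↑(cP m u)) * cW' m u = m := by
  have hcoef : cP m u * (cR m u - cX m u) - (1 - cP m u) * (cR m u + cX m u) = 0 := by
    rw [cP]; field_simp; ring
  rw [cW, cW']
  have : (↑(cP m u) : ℂ) * (m + (↑(cR m u - cX m u)) * u) + (1 - ↑(cP m u)) * (m - (↑(cR m u + cX m u)) * u)
      = m + (↑(cP m u * (cR m u - cX m u) - (1 - cP m u) * (cR m u + cX m u)) : ℂ) * u := by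
    push_cast; ring
  rw [this, hcoef]; push_cast; ring
lemma cW_diff : cW m u - cW' m u = (↑(2 * cR m u) : ℂ) * u := by
  rw [cW, cW']; push_cast; ring
lemma cP_mul (hm : Complex.normSq m ≤ 1) (hR : 0 < cR m u) :
    cP m u * (1 - cP m u) * (2 * cR m u) ^ 2 = 1 - Complex.normSq m := by
  have h := cR_sq (u := u) hm
  rw [cP]; field_simp; nlinarith [h]
lemma cP_neg (hR : 0 < cR m u) : cP m (-u) = 1 - cP m u := by
  have hx : cX m (-u) = - cX m u := by simp [cX]
  have hr : cR m (-u) = cR m u := by simp [cR, hx]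
  rw [cP, cP, hx, hr]; field_simp; ring
lemma cR_pos (hs : Complex.normSq m < 1) : 0 < cR m u :=
  Real.sqrt_pos.mpr (by nlinarith [sq_nonneg (cX m u)])
lemma absone {z : ℂ} (h : Complex.normSq z = 1) : ‖z‖ = 1 := by
  rw [Complex.norm_def, h, Real.sqrt_one]
lemma mulconj_one {z : ℂ} (h : Complex.normSq z = 1) : z * (starRingEnd ℂ) z = 1 := by
  rw [Complex.mul_conj, h, Complex.ofReal_one]


lemma cP_cont (m w0 : ℂ) (hs : Complex.normSq m < 1) :
    Continuous fun ψ : ℝ => cP m (Complex.exp (ψ * I) * w0) := by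
  have hx : Continuous fun ψ : ℝ => cX m (Complex.exp (ψ * I) * w0) := by
    apply Complex.continuous_re.comp
    exact (continuous_const.mul (((Complex.continuous_ofReal.mul continuous_const).cexp).mul continuous_const))
  have hr : Continuous fun ψ : ℝ => cR m (Complex.exp (ψ * I) * w0) := by
    apply Real.continuous_sqrt.comp
    exact (hx.pow 2).add continuous_const
  exact (hx.add hr).div (continuous_const.mul hr)
    (fun ψ => by have := cR_pos (m := m) (u := Complex.exp (ψ * I) * w0) hs; positivity)

lemma exists_psi (m2 m3 e : ℂ) (h2 : Complex.normSq m2 < 1) (h3 : Complex.normSq m3 < 1) :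
    ∃ ψ : ℝ, cP m2 (Complex.exp (ψ * I)) = cP m3 (Complex.exp (ψ * I) * (starRingEnd ℂ) e) := by
  set f : ℝ → ℝ := fun ψ => cP m2 (Complex.exp (ψ * I)) - cP m3 (Complex.exp (ψ * I) * (starRingEnd ℂ) e) with hf
  have hcont : Continuous f := by
    have := cP_cont m2 1 h2
    simp only [mul_one] at this
    exact this.sub (cP_cont m3 ((starRingEnd ℂ) e) h3)
  have hpi : f Real.pi = - f 0 := by
    have hexp : Complex.exp ((Real.pi : ℂ) * I) = -1 := by
      simpa using Complex.exp_pi_mul_I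
    have hexp0 : Complex.exp ((0 : ℝ) * I) = 1 := by simp
    simp only [hf, hexp, hexp0]
    rw [show (-1 : ℂ) * (starRingEnd ℂ) e = -(1 * (starRingEnd ℂ) e) by ring]
    rw [show (-1 : ℂ) = -(1:ℂ) by ring]
    rw [cP_neg (cR_pos h2), cP_neg (cR_pos h3)]
    ring
  have : (0:ℝ) ∈ Set.uIcc (f 0) (f Real.pi) := by
    rw [hpi]
    rcases le_total (f 0) 0 with h | h
    · exact Set.mem_uIcc.mpr (Or.inl ⟨h, by linarith⟩)
    · exact Set.mem_uIcc.mpr (Or.inr ⟨by linarith, h⟩)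
  obtain ⟨ψ, _, hψ⟩ := intermediate_value_uIcc (hcont.continuousOn (s := Set.uIcc 0 Real.pi)) this
  exact ⟨ψ, by have := hψ; simp only [hf] at this; linarith⟩

lemma quad3 (X : Matrix (Fin 3) (Fin 3) ℂ) (hX : X.PosSemidef) (hdiag : ∀ i, X i i = 1) :
    0 ≤ 1 - Complex.normSq (X 0 1) ∧ 0 ≤ 1 - Complex.normSq (X 0 2) ∧
    Complex.normSq (X 1 2 - (starRingEnd ℂ) (X 0 1) * X 0 2) ≤
      (1 - Complex.normSq (X 0 1)) * (1 - Complex.normSq (X 0 2)) := by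
  have h10 : X 1 0 = (starRingEnd ℂ) (X 0 1) := by
    have := congrFun (congrFun hX.1 1) 0
    simpa [Matrix.conjTranspose_apply] using this.symm
  have h20 : X 2 0 = (starRingEnd ℂ) (X 0 2) := by
    have := congrFun (congrFun hX.1 2) 0
    simpa [Matrix.conjTranspose_apply] using this.symm
  have h21 : X 2 1 = (starRingEnd ℂ) (X 1 2) := by
    have := congrFun (congrFun hX.1 2) 1
    simpa [Matrix.conjTranspose_apply] using this.symm
  have d0 := hdiag 0; have d1 := hdiag 1; have d2 := hdiag 2
  have mc1 : (X 1 2 - (starRingEnd ℂ) (X 0 1) * X 0 2) *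
      (starRingEnd ℂ) (X 1 2 - (starRingEnd ℂ) (X 0 1) * X 0 2)
      = (Complex.normSq (X 1 2 - (starRingEnd ℂ) (X 0 1) * X 0 2) : ℂ) := Complex.mul_conj _
  simp only [map_sub, _root_.map_mul, Complex.conj_conj] at mc1
  have mc2 : X 0 1 * (starRingEnd ℂ) (X 0 1) = (Complex.normSq (X 0 1) : ℂ) := Complex.mul_conj _
  have mc3 : X 0 2 * (starRingEnd ℂ) (X 0 2) = (Complex.normSq (X 0 2) : ℂ) := Complex.mul_conj _
  have hA : 0 ≤ 1 - Complex.normSq (X 0 1) := by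
    have hq := hX.dotProduct_mulVec_nonneg ![-(X 0 1), 1, 0]
    have hE : star ![-(X 0 1), 1, 0] ⬝ᵥ X *ᵥ ![-(X 0 1), 1, 0]
        = ((1 - Complex.normSq (X 0 1) : ℝ) : ℂ) := by
      simp only [dotProduct, Matrix.mulVec, Fin.sum_univ_three, Pi.star_apply,
        Matrix.cons_val_zero, Matrix.cons_val_one, Matrix.head_cons, Matrix.cons_val_two,
        Matrix.tail_cons, RCLike.star_def, map_neg, _root_.map_one, map_zero, _root_.map_mul, map_sub, Complex.conj_ofReal]
      rw [h10, d0, d1]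
      push_cast
      linear_combination -mc2
    rw [hE, Complex.zero_le_real] at hq
    exact hq
  have hB : 0 ≤ 1 - Complex.normSq (X 0 2) := by
    have hq := hX.dotProduct_mulVec_nonneg ![-(X 0 2), 0, 1]
    have hE : star ![-(X 0 2), 0, 1] ⬝ᵥ X *ᵥ ![-(X 0 2), 0, 1]
        = ((1 - Complex.normSq (X 0 2) : ℝ) : ℂ) := by
      simp only [dotProduct, Matrix.mulVec, Fin.sum_univ_three, Pi.star_apply,
        Matrix.cons_val_zero, Matrix.cons_val_one, Matrix.head_cons, Matrix.cons_val_two,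
        Matrix.tail_cons, RCLike.star_def, map_neg, _root_.map_one, map_zero, _root_.map_mul, map_sub, Complex.conj_ofReal]
      rw [h20, d0, d2]
      push_cast
      linear_combination -mc3
    rw [hE, Complex.zero_le_real] at hq
    exact hq
  refine ⟨hA, hB, ?_⟩
  set Ar := 1 - Complex.normSq (X 0 1) with hAr
  set Br := 1 - Complex.normSq (X 0 2) with hBr
  set cr := Complex.normSq (X 1 2 - (starRingEnd ℂ) (X 0 1) * X 0 2) with hcr
  have hq : ∀ t : ℝ, 0 ≤ Ar * cr * t ^ 2 - 2 * cr * t + Br := by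
    intro t
    have hq := hX.dotProduct_mulVec_nonneg ![-(X 0 1 * ((t : ℂ) * (X 1 2 - (starRingEnd ℂ) (X 0 1) * X 0 2))) + X 0 2,
      (t : ℂ) * (X 1 2 - (starRingEnd ℂ) (X 0 1) * X 0 2), -1]
    have hE : star ![-(X 0 1 * ((t : ℂ) * (X 1 2 - (starRingEnd ℂ) (X 0 1) * X 0 2))) + X 0 2,
        (t : ℂ) * (X 1 2 - (starRingEnd ℂ) (X 0 1) * X 0 2), -1] ⬝ᵥ
        X *ᵥ ![-(X 0 1 * ((t : ℂ) * (X 1 2 - (starRingEnd ℂ) (X 0 1) * X 0 2))) + X 0 2,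
        (t : ℂ) * (X 1 2 - (starRingEnd ℂ) (X 0 1) * X 0 2), -1]
        = ((Ar * cr * t ^ 2 - 2 * cr * t + Br : ℝ) : ℂ) := by
      simp only [dotProduct, Matrix.mulVec, Fin.sum_univ_three, Pi.star_apply,
        Matrix.cons_val_zero, Matrix.cons_val_one, Matrix.head_cons, Matrix.cons_val_two,
        Matrix.tail_cons, RCLike.star_def, map_neg, _root_.map_one, map_add, _root_.map_mul, map_sub,
        Complex.conj_ofReal]
      rw [h10, h20, h21, d0, d1, d2]
      simp only [Complex.conj_conj]
      push_cast [hAr, hBr, hcr]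
      linear_combination ((t:ℂ)^2 * (1 - X 0 1 * (starRingEnd ℂ) (X 0 1)) - 2*(t:ℂ)) * mc1
        - (t:ℂ)^2 * ((Complex.normSq (X 1 2 - (starRingEnd ℂ) (X 0 1) * X 0 2) : ℝ) : ℂ) * mc2 - mc3
    rw [hE, Complex.zero_le_real] at hq
    exact hq
  have hcr0 : 0 ≤ cr := Complex.normSq_nonneg _
  rcases eq_or_lt_of_le hcr0 with h0 | hpos
  · nlinarith
  · rcases eq_or_lt_of_le hA with hA0 | hApos
    · exfalso
      have hcrne : cr ≠ 0 := by linarith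
      have e : Ar * cr * ((Br + 1) / (2 * cr)) ^ 2 - 2 * cr * ((Br + 1) / (2 * cr)) + Br
          = Ar * ((Br + 1) ^ 2 / (4 * cr)) - 1 := by
        field_simp; ring
      have key := hq ((Br + 1) / (2 * cr))
      rw [e, ← hA0] at key
      norm_num at key
    · have hA' : Ar ≠ 0 := ne_of_gt hApos
      have e : Ar * cr * (1 / Ar) ^ 2 - 2 * cr * (1 / Ar) + Br = Br - cr / Ar := by
        field_simp; ring
      have key := hq (1 / Ar)
      rw [e] at key
      have h2 : cr / Ar ≤ Br := by linarith
      have h3 := (div_le_iff₀ hApos).mp h2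
      nlinarith


set_option maxHeartbeats 2000000 in
theorem stmt0 (d : ℕ) (hd : d = 2 ∨ d = 3) (X : Matrix (Fin d) (Fin d) ℂ)
    (hX : X.PosSemidef) (hdiag : ∀ i, X i i = 1) :
    ∃ (n : ℕ) (p : Fin n → ℝ) (v : Fin n → Fin d → ℂ),
      (∀ i, 0 ≤ p i) ∧ (∑ i, p i = 1) ∧
      (∀ i j, ‖v i j‖ = 1) ∧
      X = ∑ i, p i • pureState (v i) := by
  rcases hd with rfl | rfl
  · -- d = 2
    have d0 := hdiag 0; have d1 := hdiag 1
    have h01 : X 0 1 = (starRingEnd ℂ) (X 1 0) := by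
      have := congrFun (congrFun hX.1 0) 1
      simpa [Matrix.conjTranspose_apply] using this.symm
    set m := X 1 0 with hm
    have hA : 0 ≤ 1 - Complex.normSq m := by
      have hq := hX.dotProduct_mulVec_nonneg ![-(X 0 1), 1]
      have hE : star ![-(X 0 1), 1] ⬝ᵥ X *ᵥ ![-(X 0 1), 1]
          = ((1 - Complex.normSq m : ℝ) : ℂ) := by
        simp only [dotProduct, Matrix.mulVec, Fin.sum_univ_two, Pi.star_apply,
          Matrix.cons_val_zero, Matrix.cons_val_one, Matrix.head_cons,
          RCLike.star_def, map_neg, _root_.map_one]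
        rw [h01, d0, d1]
        simp only [Complex.conj_conj]
        push_cast
        linear_combination -(Complex.mul_conj m)
      rw [hE, Complex.zero_le_real] at hq
      exact hq
    rcases eq_or_lt_of_le hA with hA0 | hApos
    · -- |m| = 1 : single atom
      refine ⟨1, ![1], ![![1, m]], ?_, ?_, ?_, ?_⟩
      · intro i; fin_cases i <;> norm_num
      · simp
      · intro i j
        fin_cases i <;> fin_cases j <;> simp
        exact absone (by linarith)
      · ext i j
        rw [Matrix.sum_apply]
        simp only [Fin.sum_univ_one, Matrix.smul_apply, pureState, Matrix.of_apply,
          Complex.real_smul]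
        fin_cases i <;> fin_cases j <;> simp <;> push_cast
        · linear_combination d0
        · linear_combination h01
        · linear_combination hm.symm
        · linear_combination d1 - mulconj_one (by linarith : Complex.normSq m = 1)
    · -- |m| < 1 : two atoms
      have hmle : Complex.normSq m ≤ 1 := by linarith
      have hlt : Complex.normSq m < 1 := by linarith
      have hu1 : Complex.normSq (1 : ℂ) = 1 := by simp
      have hR : 0 < cR m 1 := cR_pos hlt
      set p := cP m 1
      set w := cW m 1
      set w' := cW' m 1
      have hp0 : 0 ≤ p := cP_nonneg hmle hR
      have hp1 : p ≤ 1 := cP_le_one hmle hR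
      have hw : w * (starRingEnd ℂ) w = 1 := mulconj_one (normSq_cW hmle hu1)
      have hw' : w' * (starRingEnd ℂ) w' = 1 := mulconj_one (normSq_cW' hmle hu1)
      have hmean : (↑p : ℂ) * w + (1 - ↑p) * w' = m := cW_mean hR
      have hmeanc : (↑p : ℂ) * (starRingEnd ℂ) w + (1 - ↑p) * (starRingEnd ℂ) w'
          = (starRingEnd ℂ) m := by
        have := congrArg (starRingEnd ℂ) hmean
        simpa [map_add, _root_.map_mul, map_sub, Complex.conj_ofReal] using this
      refine ⟨2, ![p, 1 - p], ![![1, w], ![1, w']], ?_, ?_, ?_, ?_⟩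
      · intro i; fin_cases i <;> simp [hp0] <;> linarith
      · simp
      · intro i j
        fin_cases i <;> fin_cases j <;> simp
        · exact absone (normSq_cW hmle hu1)
        · exact absone (normSq_cW' hmle hu1)
      · ext i j
        rw [Matrix.sum_apply]
        simp only [Fin.sum_univ_two, Matrix.smul_apply, pureState, Matrix.of_apply,
          Complex.real_smul]
        fin_cases i <;> fin_cases j <;> simp <;> push_cast
        · linear_combination d0
        · linear_combination h01 - hmeanc
        · linear_combination -hmean
        · linear_combination d1 - p * hw - (1 - p) * hw'
  · -- d = 3
    have d0 := hdiag 0; have d1 := hdiag 1; have d2 := hdiag 2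
    have h01 : X 0 1 = (starRingEnd ℂ) (X 1 0) := by
      have := congrFun (congrFun hX.1 0) 1
      simpa [Matrix.conjTranspose_apply] using this.symm
    have h02 : X 0 2 = (starRingEnd ℂ) (X 2 0) := by
      have := congrFun (congrFun hX.1 0) 2
      simpa [Matrix.conjTranspose_apply] using this.symm
    have h21 : X 2 1 = (starRingEnd ℂ) (X 1 2) := by
      have := congrFun (congrFun hX.1 2) 1
      simpa [Matrix.conjTranspose_apply] using this.symm
    set m2 := X 1 0 with hm2
    set m3 := X 2 0 with hm3
    -- quadratic form facts
    obtain ⟨hA, hB, hGle⟩ : 0 ≤ 1 - Complex.normSq m2 ∧ 0 ≤ 1 - Complex.normSq m3 ∧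
        Complex.normSq (X 1 2 - m2 * (starRingEnd ℂ) m3) ≤
          (1 - Complex.normSq m2) * (1 - Complex.normSq m3) := by
      have q := quad3 X hX hdiag
      rw [h01, h02, Complex.normSq_conj, Complex.normSq_conj, Complex.conj_conj] at q
      exact q
    set G := X 1 2 - m2 * (starRingEnd ℂ) m3 with hG
    rcases eq_or_lt_of_le hA with hA0 | hApos
    · -- |m2| = 1
      have hG0 : G = 0 := by
        have : Complex.normSq G ≤ 0 := by rw [hG]; nlinarith [Complex.normSq_nonneg (X 1 2 - m2 * (starRingEnd ℂ) m3)]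
        have := le_antisymm this (Complex.normSq_nonneg G)
        exact Complex.normSq_eq_zero.mp this
      have hx12 : X 1 2 = m2 * (starRingEnd ℂ) m3 := by
        have h := hG.symm.trans hG0
        linear_combination h
      have hx12c : (starRingEnd ℂ) (X 1 2) = (starRingEnd ℂ) m2 * m3 := by
        have := congrArg (starRingEnd ℂ) hx12
        simpa [_root_.map_mul, Complex.conj_conj] using this
      have hm2one : Complex.normSq m2 = 1 := by linarith
      rcases eq_or_lt_of_le hB with hB0 | hBpos
      · -- |m3| = 1 : single atom
        have hm3one : Complex.normSq m3 = 1 := by linarith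
        refine ⟨1, ![1], ![![1, m2, m3]], ?_, ?_, ?_, ?_⟩
        · intro i; fin_cases i <;> norm_num
        · simp
        · intro i j
          fin_cases i <;> fin_cases j <;> simp
          · exact absone hm2one
          · exact absone hm3one
        · ext i j
          rw [Matrix.sum_apply]
          simp only [Fin.sum_univ_one, Matrix.smul_apply, pureState, Matrix.of_apply,
            Complex.real_smul]
          fin_cases i <;> fin_cases j <;> simp <;> push_cast
          · linear_combination d0
          · linear_combination h01
          · linear_combination h02
          · linear_combination hm2.symm
          · linear_combination d1 - mulconj_one hm2one
          · linear_combination hx12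
          · linear_combination hm3.symm
          · linear_combination h21 + hx12c
          · linear_combination d2 - mulconj_one hm3one
      · -- |m3| < 1 : two atoms, z2 constant
        have hm3le : Complex.normSq m3 ≤ 1 := by linarith
        have hm3lt : Complex.normSq m3 < 1 := by linarith
        have hu1 : Complex.normSq (1 : ℂ) = 1 := by simp
        have hR : 0 < cR m3 1 := cR_pos hm3lt
        set p := cP m3 1
        set v := cW m3 1
        set v' := cW' m3 1
        have hp0 : 0 ≤ p := cP_nonneg hm3le hR
        have hp1 : p ≤ 1 := cP_le_one hm3le hR
        have hv : v * (starRingEnd ℂ) v = 1 := mulconj_one (normSq_cW hm3le hu1)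
        have hv' : v' * (starRingEnd ℂ) v' = 1 := mulconj_one (normSq_cW' hm3le hu1)
        have hmean : (↑p : ℂ) * v + (1 - ↑p) * v' = m3 := cW_mean hR
        have hmeanc : (↑p : ℂ) * (starRingEnd ℂ) v + (1 - ↑p) * (starRingEnd ℂ) v'
            = (starRingEnd ℂ) m3 := by
          have := congrArg (starRingEnd ℂ) hmean
          simpa [map_add, _root_.map_mul, map_sub, Complex.conj_ofReal] using this
        refine ⟨2, ![p, 1 - p], ![![1, m2, v], ![1, m2, v']], ?_, ?_, ?_, ?_⟩
        · intro i; fin_cases i <;> simp [hp0] <;> linarith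
        · simp
        · intro i j
          fin_cases i <;> fin_cases j <;> simp
          · exact absone hm2one
          · exact absone (normSq_cW hm3le hu1)
          · exact absone hm2one
          · exact absone (normSq_cW' hm3le hu1)
        · ext i j
          rw [Matrix.sum_apply]
          simp only [Fin.sum_univ_two, Matrix.smul_apply, pureState, Matrix.of_apply,
            Complex.real_smul]
          fin_cases i <;> fin_cases j <;> simp <;> push_cast
          · linear_combination d0
          · linear_combination h01
          · linear_combination h02 - hmeanc
          · linear_combination hm2.symm
          · linear_combination d1 - mulconj_one hm2one
          · linear_combination hx12 - m2 * hmeanc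
          · linear_combination hm3.symm - hmean
          · linear_combination h21 + hx12c - (starRingEnd ℂ) m2 * hmean
          · linear_combination d2 - p * hv - (1 - p) * hv'
    · -- |m2| < 1
      have hAlt : Complex.normSq m2 < 1 := by linarith
      have hm2le : Complex.normSq m2 ≤ 1 := by linarith
      rcases eq_or_lt_of_le hB with hB0 | hBpos
      · -- |m3| = 1, two atoms with z3 constant
        have hG0 : G = 0 := by
          have h1 : Complex.normSq G ≤ 0 := by nlinarith [Complex.normSq_nonneg G]
          exact Complex.normSq_eq_zero.mp (le_antisymm h1 (Complex.normSq_nonneg G))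
        have hx12 : X 1 2 = m2 * (starRingEnd ℂ) m3 := by
          have h := hG.symm.trans hG0
          linear_combination h
        have hx12c : (starRingEnd ℂ) (X 1 2) = (starRingEnd ℂ) m2 * m3 := by
          have := congrArg (starRingEnd ℂ) hx12
          simpa [_root_.map_mul, Complex.conj_conj] using this
        have hm3one : Complex.normSq m3 = 1 := by linarith
        have hu1 : Complex.normSq (1 : ℂ) = 1 := by simp
        have hR : 0 < cR m2 1 := cR_pos hAlt
        set p := cP m2 1
        set w := cW m2 1
        set w' := cW' m2 1
        have hp0 : 0 ≤ p := cP_nonneg hm2le hR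
        have hp1 : p ≤ 1 := cP_le_one hm2le hR
        have hw : w * (starRingEnd ℂ) w = 1 := mulconj_one (normSq_cW hm2le hu1)
        have hw' : w' * (starRingEnd ℂ) w' = 1 := mulconj_one (normSq_cW' hm2le hu1)
        have hmean : (↑p : ℂ) * w + (1 - ↑p) * w' = m2 := cW_mean hR
        have hmeanc : (↑p : ℂ) * (starRingEnd ℂ) w + (1 - ↑p) * (starRingEnd ℂ) w'
            = (starRingEnd ℂ) m2 := by
          have := congrArg (starRingEnd ℂ) hmean
          simpa [map_add, _root_.map_mul, map_sub, Complex.conj_ofReal] using this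
        refine ⟨2, ![p, 1 - p], ![![1, w, m3], ![1, w', m3]], ?_, ?_, ?_, ?_⟩
        · intro i; fin_cases i <;> simp [hp0] <;> linarith
        · simp
        · intro i j
          fin_cases i <;> fin_cases j <;> simp
          · exact absone (normSq_cW hm2le hu1)
          · exact absone hm3one
          · exact absone (normSq_cW' hm2le hu1)
          · exact absone hm3one
        · ext i j
          rw [Matrix.sum_apply]
          simp only [Fin.sum_univ_two, Matrix.smul_apply, pureState, Matrix.of_apply,
            Complex.real_smul]
          fin_cases i <;> fin_cases j <;> simp <;> push_cast
          · linear_combination d0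
          · linear_combination h01 - hmeanc
          · linear_combination h02
          · linear_combination hm2.symm - hmean
          · linear_combination d1 - p * hw - (1 - p) * hw'
          · linear_combination hx12 - (starRingEnd ℂ) m3 * hmean
          · linear_combination hm3.symm
          · linear_combination h21 + hx12c - m3 * hmeanc
          · linear_combination d2 - mulconj_one hm3one
      · -- main case : |m2| < 1 and |m3| < 1
        have hBlt : Complex.normSq m3 < 1 := by linarith
        have hm3le : Complex.normSq m3 ≤ 1 := by linarith
        set e := if G = 0 then 1 else G / ((‖G‖ : ℝ) : ℂ) with he_def
        have habsne : G ≠ 0 → (‖G‖ : ℝ) ≠ 0 := fun h => by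
          simpa using h
        have heG : ((‖G‖ : ℝ) : ℂ) * e = G := by
          by_cases h : G = 0
          · simp [he_def, h]
          · rw [he_def, if_neg h]
            have := habsne h
            field_simp
        have hnse : Complex.normSq e = 1 := by
          by_cases h : G = 0
          · simp [he_def, h]
          · rw [he_def, if_neg h, Complex.normSq_div, Complex.normSq_ofReal,
              ← Complex.sq_norm]
            have := habsne h
            field_simp
        obtain ⟨ψ, hψ⟩ := exists_psi m2 m3 e hAlt hBlt
        set u2 := Complex.exp ((ψ : ℂ) * Complex.I) with hu2def
        set u3 := u2 * (starRingEnd ℂ) e with hu3def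
        have hu2 : Complex.normSq u2 = 1 := by
          rw [hu2def, Complex.normSq_eq_norm_sq, Complex.norm_exp_ofReal_mul_I]; norm_num
        have hu3 : Complex.normSq u3 = 1 := by
          rw [hu3def, Complex.normSq_mul, hu2, Complex.normSq_conj, hnse]; norm_num
        have hR2 : 0 < cR m2 u2 := cR_pos hAlt
        have hR3 : 0 < cR m3 u3 := cR_pos hBlt
        set p := cP m2 u2 with hpdef
        have hpeq : cP m3 u3 = p := hψ.symm
        set w := cW m2 u2
        set w' := cW' m2 u2
        set v := cW m3 u3
        set v' := cW' m3 u3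
        have hp0 : 0 ≤ p := cP_nonneg hm2le hR2
        have hp1 : p ≤ 1 := cP_le_one hm2le hR2
        have hw : w * (starRingEnd ℂ) w = 1 := mulconj_one (normSq_cW hm2le hu2)
        have hw' : w' * (starRingEnd ℂ) w' = 1 := mulconj_one (normSq_cW' hm2le hu2)
        have hv : v * (starRingEnd ℂ) v = 1 := mulconj_one (normSq_cW hm3le hu3)
        have hv' : v' * (starRingEnd ℂ) v' = 1 := mulconj_one (normSq_cW' hm3le hu3)
        have hmean2 : (↑p : ℂ) * w + (1 - ↑p) * w' = m2 := cW_mean hR2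
        have hmean3 : (↑p : ℂ) * v + (1 - ↑p) * v' = m3 := by
          have h := cW_mean (m := m3) (u := u3) hR3
          rw [hpeq] at h
          exact h
        have hmean2c : (↑p : ℂ) * (starRingEnd ℂ) w + (1 - ↑p) * (starRingEnd ℂ) w'
            = (starRingEnd ℂ) m2 := by
          have := congrArg (starRingEnd ℂ) hmean2
          simpa [map_add, _root_.map_mul, map_sub, Complex.conj_ofReal] using this
        have hmean3c : (↑p : ℂ) * (starRingEnd ℂ) v + (1 - ↑p) * (starRingEnd ℂ) v'
            = (starRingEnd ℂ) m3 := by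
          have := congrArg (starRingEnd ℂ) hmean3
          simpa [map_add, _root_.map_mul, map_sub, Complex.conj_ofReal] using this
        -- the coupling weight
        set sA := Real.sqrt (1 - Complex.normSq m2) with hsAdef
        set sB := Real.sqrt (1 - Complex.normSq m3) with hsBdef
        have hsA : 0 < sA := Real.sqrt_pos.mpr (by linarith)
        have hsB : 0 < sB := Real.sqrt_pos.mpr (by linarith)
        have habsG : ‖G‖ ≤ sA * sB := by
          rw [Complex.norm_def, hsAdef, hsBdef, ← Real.sqrt_mul (by linarith)]
          exact Real.sqrt_le_sqrt hGle
        set rho := ‖G‖ / (sA * sB) with hrhodef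
        have hrho0 : 0 ≤ rho := div_nonneg (norm_nonneg G) (by positivity)
        have hrho1 : rho ≤ 1 := (div_le_one (by positivity)).mpr habsG
        set l := rho * (p * (1 - p)) with hldef
        have hpp : 0 ≤ p * (1 - p) := by nlinarith
        have hl0 : 0 ≤ l := mul_nonneg hrho0 hpp
        have hlle : l ≤ p * (1 - p) := by nlinarith
        -- product identities
        have e2 : p * (1 - p) * (2 * cR m2 u2) ^ 2 = 1 - Complex.normSq m2 :=
          cP_mul hm2le hR2
        have e3 : p * (1 - p) * (2 * cR m3 u3) ^ 2 = 1 - Complex.normSq m3 := by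
          have h := cP_mul (m := m3) (u := u3) hm3le hR3
          rw [hpeq] at h
          exact h
        have hprodnn : 0 ≤ p * (1 - p) * (2 * cR m2 u2) * (2 * cR m3 u3) :=
          mul_nonneg (mul_nonneg hpp (by linarith : (0:ℝ) ≤ 2 * cR m2 u2))
            (by linarith : (0:ℝ) ≤ 2 * cR m3 u3)
        have hprod : p * (1 - p) * (2 * cR m2 u2) * (2 * cR m3 u3) = sA * sB := by
          have h1 : (p * (1 - p) * (2 * cR m2 u2) * (2 * cR m3 u3)) ^ 2
              = (1 - Complex.normSq m2) * (1 - Complex.normSq m3) := by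
            rw [← e2, ← e3]; ring
          rw [← Real.sqrt_sq hprodnn, h1, Real.sqrt_mul (by linarith), hsAdef, hsBdef]
        have hlprod : l * (2 * cR m2 u2) * (2 * cR m3 u3) = ‖G‖ := by
          have h2 : l * (2 * cR m2 u2) * (2 * cR m3 u3)
              = rho * (p * (1 - p) * (2 * cR m2 u2) * (2 * cR m3 u3)) := by rw [hldef]; ring
          rw [h2, hprod, hrhodef]
          field_simp
        have hu2u3 : u2 * (starRingEnd ℂ) u3 = e := by
          rw [hu3def, _root_.map_mul, Complex.conj_conj]
          rw [show u2 * ((starRingEnd ℂ) u2 * e) = u2 * (starRingEnd ℂ) u2 * e by ring,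
            Complex.mul_conj, hu2]
          norm_num
        have hd2 : w - w' = ((2 * cR m2 u2 : ℝ) : ℂ) * u2 := cW_diff
        have hd3 : v - v' = ((2 * cR m3 u3 : ℝ) : ℂ) * u3 := cW_diff
        have hd3c : (starRingEnd ℂ) v - (starRingEnd ℂ) v'
            = ((2 * cR m3 u3 : ℝ) : ℂ) * (starRingEnd ℂ) u3 := by
          have := congrArg (starRingEnd ℂ) hd3
          simpa [map_sub, _root_.map_mul, Complex.conj_ofReal, map_ofNat] using this
        have hcast : ((l * (2 * cR m2 u2) * (2 * cR m3 u3) : ℝ) : ℂ) = ((‖G‖ : ℝ) : ℂ) := by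
          exact_mod_cast congrArg (fun r : ℝ => (r : ℂ)) hlprod
        have hkey : (↑l : ℂ) * (w - w') * ((starRingEnd ℂ) v - (starRingEnd ℂ) v') = G := by
          rw [hd2, hd3c]
          push_cast at hcast ⊢
          linear_combination ((l : ℂ) * (2 * (cR m2 u2 : ℂ)) * (2 * (cR m3 u3 : ℂ))) * hu2u3
            + e * hcast + heG
        have hkeyc : (↑l : ℂ) * ((starRingEnd ℂ) w - (starRingEnd ℂ) w') * (v - v')
            = (starRingEnd ℂ) G := by
          have := congrArg (starRingEnd ℂ) hkey
          simpa [map_sub, _root_.map_mul, Complex.conj_ofReal, Complex.conj_conj] using this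
        have hGc : (starRingEnd ℂ) G = (starRingEnd ℂ) (X 1 2) - (starRingEnd ℂ) m2 * m3 := by
          have := congrArg (starRingEnd ℂ) hG
          simpa [map_sub, _root_.map_mul, Complex.conj_conj] using this
        have hnw : Complex.normSq w = 1 := normSq_cW hm2le hu2
        have hnw' : Complex.normSq w' = 1 := normSq_cW' hm2le hu2
        have hnv : Complex.normSq v = 1 := normSq_cW hm3le hu3
        have hnv' : Complex.normSq v' = 1 := normSq_cW' hm3le hu3
        clear_value e u2 u3 p w w' v v' sA sB rho l
        refine ⟨4, ![p ^ 2 + l, p * (1 - p) - l, p * (1 - p) - l, (1 - p) ^ 2 + l],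
          ![![1, w, v], ![1, w, v'], ![1, w', v], ![1, w', v']], ?_, ?_, ?_, ?_⟩
        · intro i; fin_cases i <;> simp <;> nlinarith
        · simp [Fin.sum_univ_four]; ring
        · intro i j
          fin_cases i <;> fin_cases j <;>
            simp [Matrix.vecHead, Matrix.vecTail, absone hnw, absone hnw', absone hnv, absone hnv']
        · ext i j
          rw [Matrix.sum_apply]
          simp only [Fin.sum_univ_four, Matrix.smul_apply, pureState, Matrix.of_apply,
            Complex.real_smul]
          fin_cases i <;> fin_cases j <;> simp [Matrix.vecHead, Matrix.vecTail] <;> push_cast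
          · linear_combination d0
          · linear_combination h01 - hmean2c
          · linear_combination h02 - hmean3c
          · linear_combination hm2.symm - hmean2
          · linear_combination d1 - (p : ℂ) * hw - (1 - (p : ℂ)) * hw'
          · linear_combination (-(starRingEnd ℂ) m3) * hmean2
              - ((p : ℂ) * w + (1 - (p : ℂ)) * w') * hmean3c - hkey - hG
          · linear_combination hm3.symm - hmean3
          · linear_combination h21 - hGc - hkeyc - m3 * hmean2c
              - ((p : ℂ) * (starRingEnd ℂ) w + (1 - (p : ℂ)) * (starRingEnd ℂ) w') * hmean3
          · linear_combination d2 - (p : ℂ) * hv - (1 - (p : ℂ)) * hv'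

end
end

section
/- For every d ≥ 4 there exists a d×d correlation matrix that is an extreme point of the set of correlation matrices and has rank at least 2; consequently the set {X ⪰ 0 : X_{ii} = 1 ∀i} is not equal to the convex hull of its rank-one elements when d ≥ 4. -/
open Matrix BigOperators Complex ComplexOrder

noncomputable section

variable {ι : Type*} [Fintype ι] [DecidableEq ι]

/-!
Write `X = Vᴴ V`, where the columns `v_j ∈ ℂ²` of `V` are unit vectors and `v₀, …, v₃` are
chosen so that the quadratic forms `v ↦ vᴴ B v` at these four points determine a `2 × 2`
matrix `B`. If `X = p Y + q Z` with `Y, Z` correlation matrices and `p, q > 0`, then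
`ker X ⊆ ker Y`; since `V` has a right inverse `S`, this forces `Y = Vᴴ A V` with
`A = Sᴴ Y S`. The unit diagonal of `Y` says `v_jᴴ (A - 1) v_j = 0` for all `j`, hence
`A = 1` and `Y = X`. So `X` is an extreme point of rank `2`; extreme points of a convex hull
lie in the generating set, and the generators here have rank one.
-/

namespace Matrix

variable {m n k : Type*}

theorem PosSemidef.mulVec_eq_zero_of_smul_add_smul_mulVec_eq_zero [Fintype n]
    {Y Z : Matrix n n ℂ} (hY : Y.PosSemidef) (hZ : Z.PosSemidef) {p q : ℝ} (hp : 0 < p)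
    (hq : 0 < q) {u : n → ℂ} (hu : (p • Y + q • Z) *ᵥ u = 0) : Y *ᵥ u = 0 := by
  have hsum : p • (star u ⬝ᵥ Y *ᵥ u) + q • (star u ⬝ᵥ Z *ᵥ u) = 0 := by
    simpa [add_mulVec, smul_mulVec, dotProduct_add, dotProduct_smul] using
      congrArg (star u ⬝ᵥ ·) hu
  have hYu := smul_nonneg hp.le (hY.dotProduct_mulVec_nonneg u)
  have hZu := smul_nonneg hq.le (hZ.dotProduct_mulVec_nonneg u)
  have hY0 : p • (star u ⬝ᵥ Y *ᵥ u) = 0 := ((add_eq_zero_iff_of_nonneg hYu hZu).1 hsum).1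
  exact (hY.dotProduct_mulVec_zero_iff u).1 ((smul_eq_zero.1 hY0).resolve_left hp.ne')

theorem mem_extremePoints_of_forall_mulVec_eq_zero [Fintype n] {S : Set (Matrix n n ℂ)}
    (hS : ∀ Y ∈ S, Y.PosSemidef) {X : Matrix n n ℂ} (hX : X ∈ S)
    (h : ∀ Y ∈ S, (∀ u, X *ᵥ u = 0 → Y *ᵥ u = 0) → Y = X) : X ∈ S.extremePoints ℝ := by
  refine mem_extremePoints.2 ⟨hX, fun Y hY Z hZ ⟨p, q, hp, hq, _, hpq⟩ => ?_⟩
  subst hpq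
  refine ⟨h Y hY fun u hu => ?_, h Z hZ fun u hu => ?_⟩
  · exact (hS Y hY).mulVec_eq_zero_of_smul_add_smul_mulVec_eq_zero (hS Z hZ) hp hq hu
  · rw [add_comm] at hu
    exact (hS Z hZ).mulVec_eq_zero_of_smul_add_smul_mulVec_eq_zero (hS Y hY) hq hp hu

theorem eq_mul_mul_of_mulVec_eq_zero [Fintype n] [Fintype k] [DecidableEq k] {R : Type*}
    [CommRing R] {H : Matrix m n R} {V : Matrix k n R} {S : Matrix n k R} (hVS : V * S = 1)
    (hker : ∀ u, V *ᵥ u = 0 → H *ᵥ u = 0) : H = H * S * V := by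
  refine mulVec_injective (funext fun u => ?_)
  have hV : V *ᵥ (u - S *ᵥ V *ᵥ u) = 0 := by
    rw [mulVec_sub, mulVec_mulVec, hVS, one_mulVec, sub_self]
  have hHu := hker _ hV
  rw [mulVec_sub, sub_eq_zero] at hHu
  simpa [mulVec_mulVec, Matrix.mul_assoc] using hHu

theorem IsHermitian.eq_conjTranspose_mul_mul_of_mulVec_eq_zero [Fintype n] [Fintype k]
    [DecidableEq k] {R : Type*} [CommRing R] [StarRing R] {H : Matrix n n R}
    (hH : H.IsHermitian) {V : Matrix k n R} {S : Matrix n k R} (hVS : V * S = 1)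
    (hker : ∀ u, V *ᵥ u = 0 → H *ᵥ u = 0) : H = Vᴴ * (Sᴴ * H * S) * V := by
  have hH' := eq_mul_mul_of_mulVec_eq_zero hVS hker
  calc H = Hᴴ := hH.symm
    _ = Vᴴ * Sᴴ * H := by
      rw [hH', conjTranspose_mul, conjTranspose_mul, hH.eq, ← hH', Matrix.mul_assoc]
    _ = Vᴴ * (Sᴴ * H * S) * V := by
      conv_lhs => rw [hH']
      simp only [Matrix.mul_assoc]

theorem conjTranspose_mul_mul_apply_self [Fintype k] {R : Type*} [CommRing R] [StarRing R]
    (V : Matrix k n R) (A : Matrix k k R) (j : n) :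
    (Vᴴ * A * V) j j = star (Vᵀ j) ⬝ᵥ A *ᵥ Vᵀ j := by
  rw [Matrix.mul_assoc]
  rfl

end Matrix

def correlationMatrices (n : Type*) [Fintype n] : Set (Matrix n n ℂ) :=
  {Y | Y.PosSemidef ∧ ∀ i, Y i i = 1}

/-- Unit vectors `v_j ∈ ℂ²` whose outer products `v_j v_jᴴ`, `j < 4`, span all `2 × 2` matrices. -/
def gramVec : ℕ → Fin 2 → ℂ
  | 1 => ![0, 1]
  | 2 => ![3 / 5, 4 / 5]
  | 3 => ![3 / 5, 4 / 5 * I]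
  | _ => ![1, 0]

theorem star_gramVec_dotProduct_self (j : ℕ) : star (gramVec j) ⬝ᵥ gramVec j = 1 := by
  match j with
  | 0 | 1 | _ + 4 => simp [gramVec, dotProduct, Fin.sum_univ_two]
  | 2 => norm_num [gramVec, dotProduct, Fin.sum_univ_two, map_ofNat]
  | 3 =>
    simp only [dotProduct, gramVec, Pi.star_apply, RCLike.star_def, Fin.sum_univ_two,
      Fin.isValue, cons_val_zero, map_div₀, map_ofNat, cons_val_one, cons_val_fin_one, map_mul,
      conj_I, mul_neg, neg_mul]
    linear_combination (-16 / 25 : ℂ) * I_mul_I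

theorem eq_zero_of_quadForm_gramVec_eq_zero {B : Matrix (Fin 2) (Fin 2) ℂ}
    (hB : ∀ j < 4, star (gramVec j) ⬝ᵥ B *ᵥ gramVec j = 0) : B = 0 := by
  have h0 := hB 0 (by norm_num)
  have h1 := hB 1 (by norm_num)
  have h2 := hB 2 (by norm_num)
  have h3 := hB 3 (by norm_num)
  simp only [dotProduct, gramVec, Pi.star_apply, RCLike.star_def, mulVec, Fin.sum_univ_two,
    Fin.isValue, cons_val_zero, mul_one, cons_val_one, cons_val_fin_one, mul_zero, add_zero,
    map_one, one_mul, map_zero, zero_mul, zero_add, map_div₀, map_ofNat, map_mul, conj_I, mul_neg,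
    neg_mul] at h0 h1 h2 h3
  rw [h0, h1] at h2 h3
  have hsum : B 0 1 + B 1 0 = 0 := by linear_combination (25 / 12 : ℂ) * h2
  have hdiff : B 0 1 - B 1 0 = 0 := by
    linear_combination (-25 / 12 * I) * h3 + (B 0 1 - B 1 0) * I_mul_I
  have h01 : B 0 1 = 0 := by linear_combination (hsum + hdiff) / 2
  have h10 : B 1 0 = 0 := by linear_combination (hsum - hdiff) / 2
  ext i j
  fin_cases i <;> fin_cases j <;> assumption

def gramFactor (d : ℕ) : Matrix (Fin 2) (Fin d) ℂ := of fun k j => gramVec j k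

def extremeCorrelation (d : ℕ) : Matrix (Fin d) (Fin d) ℂ := (gramFactor d)ᴴ * gramFactor d

theorem gramFactor_mul_submatrix_one {d : ℕ} (hd : 2 ≤ d) :
    gramFactor d * (1 : Matrix (Fin d) (Fin d) ℂ).submatrix id (Fin.castLE hd) = 1 := by
  rw [← Equiv.coe_refl, mul_submatrix_one]
  ext k l
  fin_cases k <;> fin_cases l <;> rfl

theorem two_le_rank_extremeCorrelation {d : ℕ} (hd : 2 ≤ d) :
    2 ≤ (extremeCorrelation d).rank := by
  rw [extremeCorrelation, rank_conjTranspose_mul_self]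
  calc 2 = (1 : Matrix (Fin 2) (Fin 2) ℂ).rank := by simp [rank_one]
    _ ≤ (gramFactor d).rank := by
      rw [← gramFactor_mul_submatrix_one hd]
      exact rank_mul_le_left _ _

theorem extremeCorrelation_mem_correlationMatrices (d : ℕ) :
    extremeCorrelation d ∈ correlationMatrices (Fin d) :=
  ⟨posSemidef_conjTranspose_mul_self _, fun j => star_gramVec_dotProduct_self j⟩

theorem extremeCorrelation_mem_extremePoints {d : ℕ} (hd : 4 ≤ d) :
    extremeCorrelation d ∈ (correlationMatrices (Fin d)).extremePoints ℝ := by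
  refine mem_extremePoints_of_forall_mulVec_eq_zero (fun Y hY => hY.1)
    (extremeCorrelation_mem_correlationMatrices d) fun Y hY hker => ?_
  have hVS := gramFactor_mul_submatrix_one (by omega : 2 ≤ d)
  set S := (1 : Matrix (Fin d) (Fin d) ℂ).submatrix id (Fin.castLE (by omega : 2 ≤ d))
  have hY' := hY.1.isHermitian.eq_conjTranspose_mul_mul_of_mulVec_eq_zero hVS fun u hu =>
    hker u (by rw [extremeCorrelation, ← mulVec_mulVec, hu, mulVec_zero])
  have hA : Sᴴ * Y * S = 1 := by
    rw [← sub_eq_zero]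
    refine eq_zero_of_quadForm_gramVec_eq_zero fun j hj => ?_
    have hYj := hY.2 ⟨j, by omega⟩
    rw [hY', conjTranspose_mul_mul_apply_self] at hYj
    rw [sub_mulVec, dotProduct_sub, one_mulVec, star_gramVec_dotProduct_self]
    exact sub_eq_zero.2 hYj
  rw [hY', hA, Matrix.mul_one]
  rfl

theorem rank_pureState_le {n : Type*} [Fintype n] (v : n → ℂ) : (pureState v).rank ≤ 1 :=
  rank_vecMulVec_le v (star v)

theorem stmt2 (d : ℕ) (hd : 4 ≤ d) :
    (∃ X : Matrix (Fin d) (Fin d) ℂ,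
      X ∈ Set.extremePoints ℝ {Y : Matrix (Fin d) (Fin d) ℂ | Y.PosSemidef ∧ ∀ i, Y i i = 1} ∧
      2 ≤ X.rank) ∧
    {Y : Matrix (Fin d) (Fin d) ℂ | Y.PosSemidef ∧ ∀ i, Y i i = 1} ≠
      convexHull ℝ {Y : Matrix (Fin d) (Fin d) ℂ |
        ∃ v : Fin d → ℂ, (∀ i, ‖v i‖ = 1) ∧ Y = pureState v} := by
  have hX := extremeCorrelation_mem_extremePoints hd
  have hrank := two_le_rank_extremeCorrelation (by omega : 2 ≤ d)
  refine ⟨⟨_, hX, hrank⟩, fun h => ?_⟩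
  change correlationMatrices (Fin d) = _ at h
  rw [h] at hX
  obtain ⟨v, -, hv⟩ := extremePoints_convexHull_subset hX
  have := rank_pureState_le v
  rw [← hv] at this
  omega

end
end
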